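/- Cutting-edge partition (Lemma 2.3). For any vertex v ∈ Z^d, any set A ⊆ Z^d, and any r ∈ ℕ, the event {v ↔ Q_r^c through A} is the disjoint union of E''(v,r;A) and, over directed edges b = (b̲,b̄) with b̲ ∈ Q_r, of the events E'(v, b̲; A) ∩ {b is open and pivotal for v ↔ Q_r^c}; that is, {v ↔^A Q_r^c} = E''(v,r;A) ⊍ ⊍_{b∈E_r} [E'(v,b̲;A) ∩ {b open and pivotal for v ↔ Q_r^c}], where the events in the union are pairwise disjoint. -/

import Mathlib

open MeasureTheory Filter
open scoped ENNReal Topology Classical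

noncomputable section

namespace Percolation

/-- Vertices of the lattice `ℤ^d`. -/
abbrev Vert (d : ℕ) := Fin d → ℤ

/-- Euclidean norm of a lattice point. -/
def euc {d : ℕ} (x : Vert d) : ℝ := Real.sqrt (∑ i, ((x i : ℝ)) ^ 2)

/-- Sup norm of a lattice point. -/
def snorm' {d : ℕ} (x : Vert d) : ℕ := Finset.univ.sup fun i => (x i).natAbs

/-- Unordered edges (bonds) of the complete graph on `ℤ^d`. -/
abbrev Edge (d : ℕ) := Sym2 (Vert d)

/-- Percolation configurations: each bond is open (`true`) or closed (`false`). -/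
abbrev Config (d : ℕ) := Edge d → Bool

/-- `ℝ≥0∞`-valued indicator of a proposition. -/
def ind (p : Prop) : ℝ≥0∞ := if p then 1 else 0

/-- Symmetrisation of a step distribution. Under the symmetry assumption
`D (-x) = D x` it agrees with `fun x y => D (y - x)`. -/
def symD {d : ℕ} (D : Vert d → ℝ) (x y : Vert d) : ℝ := (D (x - y) + D (y - x)) / 2

lemma symD_comm {d : ℕ} (D : Vert d → ℝ) (x y : Vert d) : symD D x y = symD D y x := by
  unfold symD; ring

/-- The weight attached to an unordered edge by the step distribution `D`. -/
def edgeProb {d : ℕ} (D : Vert d → ℝ) : Edge d → ℝ :=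
  Sym2.lift ⟨symD D, symD_comm D⟩

/-- A bond percolation model on `ℤ^d`: a step distribution `D` which is a
lattice-symmetric probability distribution on `ℤ^d` vanishing at the origin,
together with, for every parameter `p`, the probability measure `P p` on
configurations under which the bonds are independently open, the bond `{x,y}`
being open with probability `p * D (y - x)` (for admissible `p`). -/
structure Model (d : ℕ) where
  D : Vert d → ℝ
  P : ℝ → Measure (Config d)
  D_zero : D 0 = 0
  D_nonneg : ∀ x, 0 ≤ D x
  D_symm : ∀ x, D (-x) = D x
  D_perm : ∀ (σ : Equiv.Perm (Fin d)) (x : Vert d), D (x ∘ σ) = D x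
  D_flip : ∀ ε : Fin d → ℤ, (∀ i, ε i = 1 ∨ ε i = -1) →
      ∀ x : Vert d, (D fun i => ε i * x i) = D x
  D_sum : HasSum D 1
  P_prob : ∀ p, IsProbabilityMeasure (P p)
  P_cylinder : ∀ p : ℝ, 0 ≤ p → (∀ x, p * D x ≤ 1) →
      ∀ (S : Finset (Edge d)) (f : Edge d → Bool),
        P p {ω | ∀ e ∈ S, ω e = f e} =
          ∏ e ∈ S, ENNReal.ofReal (if f e then p * edgeProb D e else 1 - p * edgeProb D e)

/-- `x` and `y` are distinct and joined by an open bond. -/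
def openStep {d : ℕ} (ω : Config d) (x y : Vert d) : Prop := x ≠ y ∧ ω s(x, y) = true

/-- `{x ↔ y}`: `x` is connected to `y` by a path of open bonds. -/
def Connected {d : ℕ} (ω : Config d) (x y : Vert d) : Prop :=
  Relation.ReflTransGen (openStep ω) x y

/-- Connectivity using only open bonds belonging to the bond set `K`. -/
def ConnectedIn {d : ℕ} (ω : Config d) (K : Set (Edge d)) (x y : Vert d) : Prop :=
  Relation.ReflTransGen (fun a b => a ≠ b ∧ s(a, b) ∈ K ∧ ω s(a, b) = true) x y

/-- The open cluster of `x`. -/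
def cluster {d : ℕ} (ω : Config d) (x : Vert d) : Set (Vert d) := {y | Connected ω x y}

/-- The two-point event `{x ↔ y}`. -/
def conn {d : ℕ} (x y : Vert d) : Set (Config d) := {ω | Connected ω x y}

/-- The cluster of `x` reaches euclidean distance `> r` from the origin,
i.e. the event `{x ↔ Q_r^c}` holds in `ω`. -/
def Arm {d : ℕ} (ω : Config d) (x : Vert d) (r : ℝ) : Prop :=
  ∃ y : Vert d, r < euc y ∧ Connected ω x y

/-- The one-arm event `{x ↔ Q_r^c}`. -/
def armEvent {d : ℕ} (x : Vert d) (r : ℝ) : Set (Config d) := {ω | Arm ω x r}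

/-- The euclidean ball `Q_r` (as a set of vertices). -/
def ballSet (d : ℕ) (r : ℝ) : Set (Vert d) := {x | euc x ≤ r}

namespace Model

variable {d : ℕ} (M : Model d)

/-- The two-point function `τ_p`. -/
def tau (p : ℝ) (x : Vert d) : ℝ≥0∞ := M.P p (conn 0 x)

/-- The susceptibility `χ(p)`. -/
def chi (p : ℝ) : ℝ≥0∞ := ∑' x : Vert d, M.tau p x

/-- The critical point `p_c = sup {p : χ(p) < ∞}`. -/
def pc : ℝ := sSup {p : ℝ | 0 ≤ p ∧ M.chi p ≠ ∞}

/-- The triangle diagram `△_{p_c}(0)`. -/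
def triangleDiagram : ℝ≥0∞ :=
  ∑' x : Vert d, ∑' y : Vert d, M.tau M.pc x * M.tau M.pc (y - x) * M.tau M.pc y

/-- The strong triangle condition with parameter `β`: `△_{p_c}(0) ≤ 1 + O(β)`. -/
def StrongTriangle (β : ℝ) : Prop := M.triangleDiagram ≤ 1 + ENNReal.ofReal β

/-- The susceptibility measure `Q_p(F) = χ(p)⁻¹ ∑_x P_p(F ∩ {0 ↔ x})`. -/
def Qp (p : ℝ) (F : Set (Config d)) : ℝ≥0∞ :=
  (∑' x : Vert d, M.P p (F ∩ conn 0 x)) / M.chi p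

end Model

/-- Cylinder events: events determined by the states of finitely many bonds. -/
def IsCylinder {d : ℕ} (F : Set (Config d)) : Prop :=
  ∃ S : Finset (Edge d), ∀ ω ω' : Config d, (∀ e ∈ S, ω e = ω' e) → (ω ∈ F ↔ ω' ∈ F)

/-- `F` is determined by the bonds with both endpoints in `Q_m`. -/
def DeterminedOnBall {d : ℕ} (F : Set (Config d)) (m : ℝ) : Prop :=
  ∀ ω ω' : Config d,
    (∀ e : Edge d, (∀ v ∈ e, v ∈ ballSet d m) → ω e = ω' e) → (ω ∈ F ↔ ω' ∈ F)

/-- Nearest-neighbour percolation. -/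
def IsNearestNeighbor {d : ℕ} (M : Model d) : Prop :=
  ∀ x : Vert d, M.D x = if euc x = 1 then 1 / (2 * (d : ℝ)) else 0

/-- Finite-range spread-out percolation with parameter `L`. -/
def IsFiniteRangeSpreadOut {d : ℕ} (M : Model d) (L : ℕ) : Prop :=
  ∀ x : Vert d, M.D x =
    if x ≠ 0 ∧ snorm' x ≤ L then ((2 * (L : ℝ) + 1) ^ d - 1)⁻¹ else 0

/-- Long-range spread-out percolation with parameters `L` and `α`. -/
def IsLongRangeSpreadOut {d : ℕ} (M : Model d) (L : ℕ) (α : ℝ) : Prop :=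
  ∃ c : ℝ, 0 < c ∧ ∀ x : Vert d, x ≠ 0 →
    M.D x = c / max (euc x / (L : ℝ)) 1 ^ ((d : ℝ) + α)

/-- Admissible long-range exponents: `α ∈ (0,2) ∪ (2,∞)`. -/
def GoodAlpha (α : ℝ) : Prop := 0 < α ∧ α ≠ 2

/-- The high-dimensional model classes of the paper, with `a` the effective
exponent `2 ∧ α` (read as `2` for the finite-range models). -/
def ModelClass {d : ℕ} (M : Model d) (a : ℝ) : Prop :=
  (IsNearestNeighbor M ∧ 19 ≤ d ∧ a = 2) ∨
  (∃ L : ℕ, IsFiniteRangeSpreadOut M L ∧ 6 < d ∧ a = 2) ∨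
  (∃ (L : ℕ) (α : ℝ), IsLongRangeSpreadOut M L α ∧ GoodAlpha α ∧
      3 * min 2 α < (d : ℝ) ∧ a = min 2 α)

/-- The one-arm probability is of order `r^{-1/ρ}`:
`c r^{-1/ρ} ≤ P_{p_c}(0 ↔ Q_r^c) ≤ C r^{-1/ρ}` for all `r ≥ 1`. -/
def OneArmBounds {d : ℕ} (M : Model d) (ρ : ℝ) : Prop :=
  ∃ c C : ℝ, 0 < c ∧ c ≤ C ∧ ∀ r : ℝ, 1 ≤ r →
    ENNReal.ofReal (c * r ^ (-(1 / ρ))) ≤ M.P M.pc (armEvent 0 r) ∧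
      M.P M.pc (armEvent 0 r) ≤ ENNReal.ofReal (C * r ^ (-(1 / ρ)))

/-- The configuration `ω` restricted to the vertex set `A`: every bond not
having both endpoints in `A` is made closed. -/
def restrictConfig {d : ℕ} (ω : Config d) (A : Set (Vert d)) : Config d :=
  fun e => if ∀ v ∈ e, v ∈ A then ω e else false

/-- The event `E` occurs on the vertex set `A` in the configuration `ω`. -/
def OccursOn {d : ℕ} (E : Set (Config d)) (A : Set (Vert d)) (ω : Config d) : Prop :=
  restrictConfig ω A ∈ E

/-- The event `E` occurs off the vertex set `A` in the configuration `ω`. -/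
def OccursOff {d : ℕ} (E : Set (Config d)) (A : Set (Vert d)) (ω : Config d) : Prop :=
  restrictConfig ω Aᶜ ∈ E

/-- The configuration `ω` with the bond `e` made closed. -/
def closeEdge {d : ℕ} (ω : Config d) (e : Edge d) : Config d := Function.update ω e false

/-- The configuration `ω` with the bond `e` made open. -/
def openEdge' {d : ℕ} (ω : Config d) (e : Edge d) : Config d := Function.update ω e true

/-- The restricted cluster `C̃^e(A)` of the vertex set `A`: everything that `A`
is connected to after the bond `e` is made closed. -/
def tilCSet {d : ℕ} (ω : Config d) (e : Edge d) (A : Set (Vert d)) : Set (Vert d) :=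
  {z | ∃ a ∈ A, Connected (closeEdge ω e) a z}

/-- The restricted cluster `C̃^{(u,v)}(y)`. -/
def tilC {d : ℕ} (ω : Config d) (u v y : Vert d) : Set (Vert d) :=
  {z | Connected (closeEdge ω s(u, v)) y z}

/-- `{x ↔ y on A}`. -/
def ConnOn {d : ℕ} (ω : Config d) (A : Set (Vert d)) (x y : Vert d) : Prop :=
  Connected (restrictConfig ω A) x y

/-- `{x ↔ y through A}`, also written `{x ↔^A y}`. -/
def ConnThrough {d : ℕ} (ω : Config d) (A : Set (Vert d)) (x y : Vert d) : Prop :=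
  Connected ω x y ∧ ¬ ConnOn ω Aᶜ x y

/-- `{x ↔ Q_r^c on A}`. -/
def ArmOn {d : ℕ} (ω : Config d) (A : Set (Vert d)) (x : Vert d) (r : ℝ) : Prop :=
  Arm (restrictConfig ω A) x r

/-- `{x ↔ Q_r^c through A}`. -/
def ArmThrough {d : ℕ} (ω : Config d) (A : Set (Vert d)) (x : Vert d) (r : ℝ) : Prop :=
  Arm ω x r ∧ ¬ ArmOn ω Aᶜ x r

/-- `(u,v)` is a directed pivotal bond for the connection `x ↔ y` in `ω`:
with the bond closed, `x` is connected to `u` and `v` to `y` but `x` is not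
connected to `y`, while with the bond open `x` is connected to `y`. -/
def PivotalConn {d : ℕ} (ω : Config d) (u v x y : Vert d) : Prop :=
  Connected (openEdge' ω s(u, v)) x y ∧ ¬ Connected (closeEdge ω s(u, v)) x y ∧
    Connected (closeEdge ω s(u, v)) x u ∧ Connected (closeEdge ω s(u, v)) v y

/-- `(u,v)` is a directed pivotal bond for the one-arm event `{x ↔ Q_r^c}`. -/
def PivotalArm {d : ℕ} (ω : Config d) (u v x : Vert d) (r : ℝ) : Prop :=
  Arm (openEdge' ω s(u, v)) x r ∧ ¬ Arm (closeEdge ω s(u, v)) x r ∧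
    Connected (closeEdge ω s(u, v)) x u ∧ Arm (closeEdge ω s(u, v)) v r

/-- `(u,v)` is an open directed pivotal bond for `x ↔ y`. -/
def OpenPivotalConn {d : ℕ} (ω : Config d) (u v x y : Vert d) : Prop :=
  ω s(u, v) = true ∧ PivotalConn ω u v x y

/-- `(u,v)` is an open directed pivotal bond for `{x ↔ Q_r^c}`. -/
def OpenPivotalArm {d : ℕ} (ω : Config d) (u v x : Vert d) (r : ℝ) : Prop :=
  ω s(u, v) = true ∧ PivotalArm ω u v x r

/-- The event `E'(v,x;A)`. -/
def Eprime {d : ℕ} (ω : Config d) (v x : Vert d) (A : Set (Vert d)) : Prop :=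
  ConnThrough ω A v x ∧
    ∀ u₁ v₁ : Vert d, PivotalConn ω u₁ v₁ v x → ¬ ConnThrough ω A v u₁

/-- The event `E''(v,r;A)`. -/
def Edprime {d : ℕ} (ω : Config d) (v : Vert d) (r : ℝ) (A : Set (Vert d)) : Prop :=
  ArmThrough ω A v r ∧
    ∀ u₁ v₁ : Vert d, PivotalArm ω u₁ v₁ v r → ¬ ConnThrough ω A v u₁

/-- The event `H'(v,z,x;A) = E'(v,x;A) ∩ ({v ↔ z} ∘ {z ↔ x})`. -/
def Hprime {d : ℕ} (ω : Config d) (v z x : Vert d) (A : Set (Vert d)) : Prop :=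
  Eprime ω v x A ∧ ∃ K : Set (Edge d), ConnectedIn ω K v z ∧ ConnectedIn ω Kᶜ z x

/-- `{A ⇔ x}`: the vertex set `A` is doubly connected to `x`. -/
def DoubleConnSet {d : ℕ} (ω : Config d) (A : Set (Vert d)) (x : Vert d) : Prop :=
  x ∈ A ∨ ∃ K : Set (Edge d),
    (∃ a ∈ A, ConnectedIn ω K a x) ∧ ∃ a ∈ A, ConnectedIn ω Kᶜ a x

/-- `{A ⇔ Q_r^c}`: the vertex set `A` is doubly connected to `Q_r^c`. -/
def DoubleArmSet {d : ℕ} (ω : Config d) (A : Set (Vert d)) (r : ℝ) : Prop :=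
  ∃ K : Set (Edge d),
    (∃ a ∈ A, ∃ y : Vert d, r < euc y ∧ ConnectedIn ω K a y) ∧
      ∃ a ∈ A, ∃ y : Vert d, r < euc y ∧ ConnectedIn ω Kᶜ a y

/-- `{A ↔ Q_r^c}`. -/
def SetArm {d : ℕ} (ω : Config d) (A : Set (Vert d)) (r : ℝ) : Prop :=
  ∃ a ∈ A, Arm ω a r

/-- The event (for a directed bond `b`) appearing in the cutting-bond
partition: `E'(v,b̲;A)` together with `b ∈ E_r` being open and pivotal for
`{v ↔ Q_r^c}`. -/
def CutAt {d : ℕ} (ω : Config d) (v : Vert d) (r : ℝ) (A : Set (Vert d))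
    (b : Vert d × Vert d) : Prop :=
  euc b.1 ≤ r ∧ Eprime ω v b.1 A ∧ ω s(b.1, b.2) = true ∧ PivotalArm ω b.1 b.2 v r

/-- The weight `p_c D(v-u)` of a directed bond `(u,v)`. -/
def edgeWeight {d : ℕ} (M : Model d) (b : Vert d × Vert d) : ℝ≥0∞ :=
  ENNReal.ofReal (M.pc * M.D (b.2 - b.1))

/-- Membership of a directed bond in `E_r`. -/
def inEr {d : ℕ} (r : ℝ) (b : Vert d × Vert d) : Prop := euc b.1 ≤ r

/-- The nested expectations of the lace expansion: each additional bond in the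
list gives a new independent critical configuration with the indicator of
`E'(w, u_j; C̃_{j-1})`, and the recursion records the restricted cluster
`C̃_j = C̃^{(u_j,v_j)}(v_{j-1})` passed on to the next configuration; `final`
is evaluated on the last cluster and vertex. -/
def laceRec {d : ℕ} (M : Model d) (final : Set (Vert d) → Vert d → ℝ≥0∞) :
    List (Vert d × Vert d) → Set (Vert d) → Vert d → ℝ≥0∞
  | [], A, w => final A w
  | b :: L, A, w =>
      ∫⁻ ω, ind (Eprime ω w b.1 A) *
        laceRec M final L (tilC ω b.1 b.2 w) b.2 ∂ M.P M.pc

/-- Generic lace-expansion coefficient with `n+1` directed bonds summed over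
`E_r`, initial (configuration-`0`) indicator `init` and final factor `final`. -/
def laceSum {d : ℕ} (M : Model d) (init : Config d → Vert d → Prop) (m r : ℝ)
    (final : Set (Vert d) → Vert d → ℝ≥0∞) (n : ℕ) : ℝ≥0∞ :=
  ∑' es : Fin (n + 1) → Vert d × Vert d,
    ind (∀ j, inEr r (es j)) * (∏ j, edgeWeight M (es j)) *
      ∫⁻ ω₀, ind (init ω₀ (es 0).1) *
        laceRec M final (List.ofFn fun j : Fin n => es j.succ)
          (tilCSet ω₀ s((es 0).1, (es 0).2) (ballSet d m)) (es 0).2 ∂ M.P M.pc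

/-- The lace-expansion coefficients `π^{(n)}(x,r;F)`. -/
def piCoeff {d : ℕ} (M : Model d) (F : Set (Config d)) (m r : ℝ) (x : Vert d) :
    ℕ → ℝ≥0∞
  | 0 => M.P M.pc (F ∩ {ω | Connected ω 0 x ∧ DoubleConnSet ω (ballSet d m) x})
  | n + 1 =>
      laceSum M (fun ω u => ω ∈ F ∧ Connected ω 0 u ∧ DoubleConnSet ω (ballSet d m) u) m r
        (fun A w => M.P M.pc {ω | Eprime ω w x A}) n

/-- The lace-expansion coefficients `ξ^{(n)}(r;F)`. -/
def xiCoeff {d : ℕ} (M : Model d) (F : Set (Config d)) (m r : ℝ) : ℕ → ℝ≥0∞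
  | 0 => M.P M.pc (F ∩ {ω | Arm ω 0 r ∧ DoubleArmSet ω (ballSet d m) r})
  | n + 1 =>
      laceSum M (fun ω u => ω ∈ F ∧ Connected ω 0 u ∧ DoubleConnSet ω (ballSet d m) u) m r
        (fun A w => M.P M.pc {ω | Edprime ω w r A}) n

/-- The final factor of `γ^{(n)}`, consuming the last directed bond `b`. -/
def gammaFinal {d : ℕ} (M : Model d) (r : ℝ) (b : Vert d × Vert d)
    (A : Set (Vert d)) (w : Vert d) : ℝ≥0∞ :=
  ∫⁻ ω, ind (OccursOn {ω' | Eprime ω' w b.1 A ∧ Arm ω' w r} (tilC ω b.1 b.2 w) ω) *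
      M.P M.pc {ω₁ | ArmOn ω₁ (tilC ω b.1 b.2 w)ᶜ b.2 r} ∂ M.P M.pc

/-- The lace-expansion coefficients `γ^{(n)}(r;F)`. -/
def gammaCoeff {d : ℕ} (M : Model d) (F : Set (Config d)) (m r : ℝ) : ℕ → ℝ≥0∞
  | 0 => ∑' b : Vert d × Vert d,
      ind (inEr r b) * edgeWeight M b *
        ∫⁻ ω, ind (OccursOn
            (F ∩ {ω' | Connected ω' 0 b.1 ∧ DoubleConnSet ω' (ballSet d m) b.1 ∧
              SetArm ω' (ballSet d m) r})
            (tilCSet ω s(b.1, b.2) (ballSet d m)) ω) *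
          M.P M.pc {ω₁ | ArmOn ω₁ (tilCSet ω s(b.1, b.2) (ballSet d m))ᶜ b.2 r} ∂ M.P M.pc
  | n + 1 => ∑' es : Fin (n + 2) → Vert d × Vert d,
      ind (∀ j, inEr r (es j)) * (∏ j, edgeWeight M (es j)) *
        ∫⁻ ω₀, ind (ω₀ ∈ F ∧ Connected ω₀ 0 (es 0).1 ∧
              DoubleConnSet ω₀ (ballSet d m) (es 0).1) *
          laceRec M (gammaFinal M r (es (Fin.last (n + 1))))
            (List.ofFn fun j : Fin n => es (j.succ.castSucc : Fin (n + 2)))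
            (tilCSet ω₀ s((es 0).1, (es 0).2) (ballSet d m)) (es 0).2 ∂ M.P M.pc

/-- `P_{p_c}(w ↔ Q_r^c) - P_{p_c}^{A}(w ↔ Q_r^c)`. -/
def diffArm {d : ℕ} (M : Model d) (r : ℝ) (A : Set (Vert d)) (w : Vert d) : ℝ≥0∞ :=
  M.P M.pc (armEvent w r) - M.P M.pc {ω | ArmOn ω Aᶜ w r}

/-- The lace-expansion remainder `R^{(N)}(r;F)`. -/
def RCoeff {d : ℕ} (M : Model d) (F : Set (Config d)) (m r : ℝ) (N : ℕ) : ℝ≥0∞ :=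
  laceSum M (fun ω u => ω ∈ F ∧ Connected ω 0 u ∧ DoubleConnSet ω (ballSet d m) u) m r
    (diffArm M r) N

/-- The lace-expansion coefficients `ψ^{(n)}(v,r;F)`. -/
def psiCoeff {d : ℕ} (M : Model d) (F : Set (Config d)) (m r : ℝ) (n : ℕ)
    (v : Vert d) : ℝ≥0∞ :=
  ∑' u : Vert d, ind (euc u ≤ r) * ENNReal.ofReal (M.pc * M.D (v - u)) *
    piCoeff M F m r u n

/-- The truncated coefficients `π^{(n)}_m(x,r)`. -/
def piM {d : ℕ} (M : Model d) (m r : ℝ) (x : Vert d) : ℕ → ℝ≥0∞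
  | 0 => M.P M.pc {ω | Eprime ω 0 x (ballSet d m)}
  | n + 1 =>
      laceSum M (fun ω u => Eprime ω 0 u (ballSet d m)) m r
        (fun A w => M.P M.pc {ω | Eprime ω w x A}) n

/-- The truncated coefficients `φ^{(n)}_m(z,x,r)`. -/
def phiM {d : ℕ} (M : Model d) (m r : ℝ) (z x : Vert d) : ℕ → ℝ≥0∞
  | 0 => M.P M.pc {ω | Hprime ω 0 z x (ballSet d m)}
  | n + 1 =>
      laceSum M (fun ω u => Eprime ω 0 u (ballSet d m)) m r
        (fun A w => M.P M.pc {ω | Hprime ω w z x A}) n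

/-- `Π̃_m(x,r)`. -/
def PiTilde {d : ℕ} (M : Model d) (m r : ℝ) (x : Vert d) : ℝ≥0∞ :=
  ∑' n : ℕ, piM M m r x n

/-- `Φ̃_m(x,y,r)`. -/
def PhiTilde {d : ℕ} (M : Model d) (m r : ℝ) (x y : Vert d) : ℝ≥0∞ :=
  ∑' n : ℕ, phiM M m r x y n

/-- A backbone bond: the directed bond `(u,v)` is open and `{0 ↔ u}` and
`{v ↔ ∞}` occur disjointly. -/
def BackboneEdge {d : ℕ} (ω : Config d) (u v : Vert d) : Prop :=
  u ≠ v ∧ ω s(u, v) = true ∧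
    ∃ K : Set (Edge d), ConnectedIn ω K 0 u ∧ {y | ConnectedIn ω Kᶜ v y}.Infinite

/-- A backbone-pivotal bond: the open directed bond `(u,v)` is used by every
infinite self-avoiding walk in the cluster of the origin starting at `0`. -/
def BackbonePivotal {d : ℕ} (ω : Config d) (u v : Vert d) : Prop :=
  u ≠ v ∧ ω s(u, v) = true ∧ (cluster ω 0).Infinite ∧
    ¬ (cluster (closeEdge ω s(u, v)) 0).Infinite ∧
    Connected (closeEdge ω s(u, v)) 0 u ∧ (cluster (closeEdge ω s(u, v)) v).Infinite

/-- `b` is the `k`-th open (directed) pivotal bond for `{0 ↔ x}` (`k ≥ 1`). -/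
def NthPivotal {d : ℕ} (ω : Config d) (x : Vert d) (k : ℕ)
    (b : Vert d × Vert d) : Prop :=
  OpenPivotalConn ω b.1 b.2 0 x ∧
    {b' : Vert d × Vert d | OpenPivotalConn ω b'.1 b'.2 0 x ∧
        Connected (closeEdge ω s(b.1, b.2)) 0 b'.2}.ncard = k - 1

/-- `b` is the `k`-th backbone-pivotal bond (`k ≥ 1`). -/
def NthBbPivotal {d : ℕ} (ω : Config d) (k : ℕ) (b : Vert d × Vert d) : Prop :=
  BackbonePivotal ω b.1 b.2 ∧
    {b' : Vert d × Vert d | BackbonePivotal ω b'.1 b'.2 ∧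
        Connected (closeEdge ω s(b.1, b.2)) 0 b'.2}.ncard = k - 1

/-- `Z_m^x`: the union of the first `m` sausages of the connection `{0 ↔ x}`. -/
def ZmConn {d : ℕ} (ω : Config d) (x : Vert d) (m : ℕ) : Set (Vert d) :=
  {z | ∃ k, 1 ≤ k ∧ k ≤ m ∧ ∃ b : Vert d × Vert d,
      NthPivotal ω x k b ∧ Connected (closeEdge ω s(b.1, b.2)) 0 z}

/-- `Z_m^∞`: the union of the first `m` backbone sausages. -/
def ZmInf {d : ℕ} (ω : Config d) (m : ℕ) : Set (Vert d) :=
  {z | ∃ k, 1 ≤ k ∧ k ≤ m ∧ ∃ b : Vert d × Vert d,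
      NthBbPivotal ω k b ∧ Connected (closeEdge ω s(b.1, b.2)) 0 z}

/-- A bond of `S[0,x]`: the open bond `(b₁,b₂)` with `{0 ↔ b₁}` and
`{b₂ ↔ x}` occurring disjointly. -/
def SEdge {d : ℕ} (ω : Config d) (x : Vert d) (b : Vert d × Vert d) : Prop :=
  b.1 ≠ b.2 ∧ ω s(b.1, b.2) = true ∧
    ∃ K : Set (Edge d), ConnectedIn ω K 0 b.1 ∧ ConnectedIn ω Kᶜ b.2 x

/-!
The pivotal bonds of `{v ↔ Q_r^c}` are linearly ordered along the arm: of two distinct ones, the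
earlier is pivotal for the connection from `v` to the bottom of the later, and conversely every
pivotal bond of that connection is pivotal for the arm. The cutting bond is the first pivotal bond
whose bottom is reached from `v` through `A`, and `E''(v,r;A)` is the case that there is none.
A first one exists by strong induction on the length of a path from `v` to the bottom of a
candidate avoiding the candidate; it is unique because the earlier of two candidates violates
`E'` for the later one.
-/

section CuttingBond

variable {d : ℕ} {ω ω₁ ω₂ : Config d} {e : Edge d} {x y u w v : Vert d} {r : ℝ}
  {A : Set (Vert d)} {b b' : Vert d × Vert d}

theorem openStep.mono (h : ω₁ ≤ ω₂) (hxy : openStep ω₁ x y) : openStep ω₂ x y :=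
  ⟨hxy.1, le_antisymm (Bool.le_true _) (hxy.2 ▸ h s(x, y))⟩

theorem Connected.mono (h : ω₁ ≤ ω₂) (hc : Connected ω₁ x y) : Connected ω₂ x y :=
  Relation.ReflTransGen.mono (fun _ _ => openStep.mono h) x y hc

theorem Connected.symm (h : Connected ω x y) : Connected ω y x :=
  Relation.ReflTransGen.mono (fun _ _ hab => ⟨hab.1.symm, Sym2.eq_swap ▸ hab.2⟩) _ _
    (Relation.ReflTransGen.swap _ _ h)

theorem closeEdge_le (ω : Config d) (e : Edge d) : closeEdge ω e ≤ ω :=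
  update_le_iff.2 ⟨Bool.false_le _, fun _ _ => le_rfl⟩

theorem closeEdge_mono (h : ω₁ ≤ ω₂) (e : Edge d) : closeEdge ω₁ e ≤ closeEdge ω₂ e :=
  update_le_update_iff.2 ⟨le_rfl, fun j _ => h j⟩

theorem closeEdge_closeEdge_le (ω : Config d) (e e' : Edge d) :
    closeEdge (closeEdge ω e) e' ≤ closeEdge ω e' :=
  closeEdge_mono (closeEdge_le ω e) e'

theorem restrictConfig_le (ω : Config d) (A : Set (Vert d)) : restrictConfig ω A ≤ ω := by
  intro f
  unfold restrictConfig
  split_ifs <;> simp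

theorem closeEdge_of_eq_false (h : ω e = false) : closeEdge ω e = ω :=
  Function.update_eq_self_iff.2 h.symm

theorem openEdge'_of_eq_true (h : ω e = true) : openEdge' ω e = ω :=
  Function.update_eq_self_iff.2 h.symm

theorem openStep.closeEdge (h : openStep ω x y) (he : s(x, y) ≠ e) :
    openStep (closeEdge ω e) x y :=
  ⟨h.1, (Function.update_of_ne he _ _).trans h.2⟩

theorem le_openEdge' (ω : Config d) (e : Edge d) : ω ≤ openEdge' ω e :=
  le_update_iff.2 ⟨Bool.le_true _, fun _ _ => le_rfl⟩

theorem Arm.mono (h : ω₁ ≤ ω₂) (harm : Arm ω₁ x r) : Arm ω₂ x r :=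
  harm.imp fun _ ⟨hy, hxy⟩ => ⟨hy, hxy.mono h⟩

theorem Connected.closeEdge_or_crossing (h : Connected ω x y) :
    Connected (closeEdge ω s(u, w)) x y ∨
      (Connected (closeEdge ω s(u, w)) x u ∧ Connected ω w y) ∨
      (Connected (closeEdge ω s(u, w)) x w ∧ Connected ω u y) := by
  induction h using Relation.ReflTransGen.head_induction_on with
  | refl => exact Or.inl .refl
  | @head a c hstep htail ih =>
    by_cases hac : s(a, c) = s(u, w)
    · rcases Sym2.eq_iff.1 hac with ⟨rfl, rfl⟩ | ⟨rfl, rfl⟩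
      · exact Or.inr (Or.inl ⟨.refl, htail⟩)
      · exact Or.inr (Or.inr ⟨.refl, htail⟩)
    · have hstep' := hstep.closeEdge hac
      rcases ih with h | ⟨h, h'⟩ | ⟨h, h'⟩
      · exact Or.inl (h.head hstep')
      · exact Or.inr (Or.inl ⟨h.head hstep', h'⟩)
      · exact Or.inr (Or.inr ⟨h.head hstep', h'⟩)

def ConnectedInSteps (ω : Config d) : ℕ → Vert d → Vert d → Prop
  | 0, x, y => x = y
  | n + 1, x, y => ∃ z, openStep ω x z ∧ ConnectedInSteps ω n z y

theorem ConnectedInSteps.connected :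
    ∀ {n : ℕ} {x y : Vert d}, ConnectedInSteps ω n x y → Connected ω x y
  | 0, _, _, rfl => .refl
  | _ + 1, _, _, ⟨_, hstep, h⟩ => h.connected.head hstep

theorem Connected.exists_connectedInSteps (h : Connected ω x y) :
    ∃ n, ConnectedInSteps ω n x y := by
  induction h using Relation.ReflTransGen.head_induction_on with
  | refl => exact ⟨0, rfl⟩
  | head hstep _ ih =>
    obtain ⟨n, hn⟩ := ih
    exact ⟨n + 1, _, hstep, hn⟩

theorem ConnectedInSteps.mono (hω : ω₁ ≤ ω₂) :
    ∀ {n : ℕ} {x y : Vert d}, ConnectedInSteps ω₁ n x y → ConnectedInSteps ω₂ n x y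
  | 0, _, _, h => h
  | _ + 1, _, _, ⟨z, hstep, h⟩ => ⟨z, hstep.mono hω, h.mono hω⟩

theorem ConnectedInSteps.closeEdge_or_crossing :
    ∀ {n : ℕ} {x y : Vert d}, ConnectedInSteps ω n x y →
      ConnectedInSteps (closeEdge ω s(u, w)) n x y ∨
        ∃ k < n, ConnectedInSteps (closeEdge ω s(u, w)) k x u ∨
          ConnectedInSteps (closeEdge ω s(u, w)) k x w
  | 0, _, _, h => Or.inl h
  | n + 1, x, _, ⟨z, hstep, h⟩ => by
    by_cases hxz : s(x, z) = s(u, w)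
    · rcases Sym2.eq_iff.1 hxz with ⟨rfl, rfl⟩ | ⟨rfl, rfl⟩
      · exact Or.inr ⟨0, n.succ_pos, Or.inl rfl⟩
      · exact Or.inr ⟨0, n.succ_pos, Or.inr rfl⟩
    · have hstep' := hstep.closeEdge hxz
      rcases h.closeEdge_or_crossing with h | ⟨k, hk, h | h⟩
      · exact Or.inl ⟨z, hstep', h⟩
      · exact Or.inr ⟨k + 1, Nat.succ_lt_succ hk, Or.inl ⟨z, hstep', h⟩⟩
      · exact Or.inr ⟨k + 1, Nat.succ_lt_succ hk, Or.inr ⟨z, hstep', h⟩⟩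

namespace PivotalArm

variable {u' w' : Vert d}

theorem not_connected_top (h : PivotalArm ω u w v r) : ¬ Connected (closeEdge ω s(u, w)) v w :=
  fun hc => h.2.1 (h.2.2.2.imp fun _ ⟨hy, hwy⟩ => ⟨hy, hc.trans hwy⟩)

theorem ne (h : PivotalArm ω u w v r) : u ≠ w := by
  rintro rfl
  exact h.not_connected_top h.2.2.1

theorem euc_le (h : PivotalArm ω u w v r) : euc u ≤ r :=
  le_of_not_gt fun hu => h.2.1 ⟨u, hu, h.2.2.1⟩

theorem edge_open (harm : Arm ω v r) (h : PivotalArm ω u w v r) : ω s(u, w) = true := by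
  by_contra hclosed
  exact h.2.1 (by rwa [closeEdge_of_eq_false (Bool.eq_false_iff.2 hclosed)])

theorem connected_or_connected (hb : PivotalArm ω u w v r) (hb' : PivotalArm ω u' w' v r) :
    Connected (closeEdge ω s(u', w')) v u ∨ Connected (closeEdge ω s(u, w)) v u' := by
  rcases hb.2.2.1.closeEdge_or_crossing (u := u') (w := w') with h | ⟨h, -⟩ | ⟨h, -⟩
  · exact Or.inl (h.mono (closeEdge_closeEdge_le ω _ _))
  · exact Or.inr (h.mono (closeEdge_le _ _))
  · exact absurd (h.mono (closeEdge_closeEdge_le ω _ _)) hb'.not_connected_top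

/-- The arm from `w` must cross `(u', w')` from `u'` to `w'`. -/
theorem pivotalConn_of_connected (hb : PivotalArm ω u w v r) (hb' : PivotalArm ω u' w' v r)
    (harm : Arm ω v r) (hne : s(u, w) ≠ s(u', w')) (hvu : Connected (closeEdge ω s(u', w')) v u) :
    PivotalConn ω u w v u' := by
  have hstep : openStep (closeEdge ω s(u', w')) u w :=
    openStep.closeEdge ⟨hb.ne, hb.edge_open harm⟩ hne
  have hstep' : openStep (closeEdge ω s(u, w)) u' w' :=
    openStep.closeEdge ⟨hb'.ne, hb'.edge_open harm⟩ hne.symm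
  obtain ⟨y, hy, hwy⟩ := hb.2.2.2
  have hcross : Connected (closeEdge ω s(u, w)) w u' ∧ Connected (closeEdge ω s(u, w)) w' y := by
    rcases hwy.closeEdge_or_crossing (u := u') (w := w') with h | ⟨h, h'⟩ | ⟨h, -⟩
    · exact absurd ⟨y, hy, (hvu.tail hstep).trans (h.mono (closeEdge_closeEdge_le ω _ _))⟩
        hb'.2.1
    · exact ⟨h.mono (closeEdge_le _ _), h'⟩
    · exact absurd ((hvu.tail hstep).trans (h.mono (closeEdge_closeEdge_le ω _ _)))
        hb'.not_connected_top
  refine ⟨hb'.2.2.1.mono ((closeEdge_le ω _).trans (le_openEdge' ω _)), fun hvu' => ?_, hb.2.2.1,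
    hcross.1⟩
  exact hb.2.1 ⟨y, hy, (hvu'.tail hstep').trans hcross.2⟩

theorem pivotalConn_or_pivotalConn (hb : PivotalArm ω u w v r) (hb' : PivotalArm ω u' w' v r)
    (harm : Arm ω v r) (hne : (u, w) ≠ (u', w')) :
    PivotalConn ω u w v u' ∨ PivotalConn ω u' w' v u := by
  by_cases he : s(u, w) = s(u', w')
  · rcases Sym2.eq_iff.1 he with ⟨rfl, rfl⟩ | ⟨rfl, rfl⟩
    · exact absurd rfl hne
    · exact absurd (Sym2.eq_swap ▸ hb'.2.2.1) hb.not_connected_top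
  · rcases hb.connected_or_connected hb' with h | h
    · exact Or.inl (hb.pivotalConn_of_connected hb' harm he h)
    · exact Or.inr (hb'.pivotalConn_of_connected hb harm (Ne.symm he) h)

end PivotalArm

theorem PivotalConn.pivotalArm {u₁ w₁ : Vert d} (harm : Arm ω v r) (hb : PivotalArm ω u w v r)
    (hp : PivotalConn ω u₁ w₁ v u) : PivotalArm ω u₁ w₁ v r := by
  have hne : s(u₁, w₁) ≠ s(u, w) := fun he => hp.2.1 (he ▸ hb.2.2.1)
  have hstep : openStep (closeEdge ω s(u₁, w₁)) u w :=
    openStep.closeEdge ⟨hb.ne, hb.edge_open harm⟩ hne.symm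
  have hnoarm : ¬ Arm (closeEdge ω s(u₁, w₁)) v r := by
    rintro ⟨y, hy, hvy⟩
    rcases hvy.closeEdge_or_crossing (u := u) (w := w) with h | ⟨h, -⟩ | ⟨h, -⟩
    · exact hb.2.1 ⟨y, hy, h.mono (closeEdge_closeEdge_le ω _ _)⟩
    · exact hp.2.1 (h.mono (closeEdge_le _ _))
    · exact hb.not_connected_top (h.mono (closeEdge_closeEdge_le ω _ _))
  obtain ⟨y, hy, hwy⟩ := hb.2.2.2
  refine ⟨harm.mono (le_openEdge' ω _), hnoarm, hp.2.2.1, y, hy, ?_⟩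
  rcases hwy.symm.closeEdge_or_crossing (u := u₁) (w := w₁) with h | ⟨h, -⟩ | ⟨h, -⟩
  · exact (hp.2.2.2.tail hstep).trans (h.mono (closeEdge_closeEdge_le ω _ _)).symm
  · exact absurd ⟨y, hy, hp.2.2.1.trans (h.mono (closeEdge_closeEdge_le ω _ _)).symm⟩ hnoarm
  · exact (h.mono (closeEdge_closeEdge_le ω _ _)).symm

theorem exists_cutAt_of_connectedInSteps (harm : Arm ω v r) (n : ℕ) :
    ∀ b : Vert d × Vert d, PivotalArm ω b.1 b.2 v r → ConnThrough ω A v b.1 →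
      ConnectedInSteps (closeEdge ω s(b.1, b.2)) n v b.1 → ∃ b, CutAt ω v r A b := by
  induction n using Nat.strong_induction_on with
  | _ n ih =>
  intro b hb hvb hn
  by_cases hfirst : ∀ u₁ w₁, PivotalConn ω u₁ w₁ v b.1 → ¬ ConnThrough ω A v u₁
  · exact ⟨b, hb.euc_le, ⟨hvb, hfirst⟩, hb.edge_open harm, hb⟩
  -- otherwise an earlier pivotal bond is a candidate reached in fewer steps
  push Not at hfirst
  obtain ⟨u₁, w₁, hp, hvu₁⟩ := hfirst
  rcases hn.closeEdge_or_crossing (u := u₁) (w := w₁) with h | ⟨k, hk, h | h⟩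
  · exact absurd (h.connected.mono (closeEdge_closeEdge_le ω _ _)) hp.2.1
  · exact ih k hk (u₁, w₁) (hp.pivotalArm harm hb) hvu₁ (h.mono (closeEdge_closeEdge_le ω _ _))
  · exact absurd ((h.connected.mono (closeEdge_closeEdge_le ω _ _)).trans hp.2.2.2) hp.2.1

theorem exists_cutAt_of_not_edprime (h : ArmThrough ω A v r) (hE : ¬ Edprime ω v r A) :
    ∃ b, CutAt ω v r A b := by
  obtain ⟨u, w, hb, hvu⟩ : ∃ u w, PivotalArm ω u w v r ∧ ConnThrough ω A v u := by
    simpa [Edprime, h] using hE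
  obtain ⟨n, hn⟩ := hb.2.2.1.exists_connectedInSteps
  exact exists_cutAt_of_connectedInSteps h.1 n (u, w) hb hvu hn

theorem CutAt.armThrough (h : CutAt ω v r A b) : ArmThrough ω A v r := by
  obtain ⟨-, ⟨⟨-, hvb⟩, -⟩, hopen, hb⟩ := h
  refine ⟨openEdge'_of_eq_true hopen ▸ hb.1, ?_⟩
  rintro ⟨y, hy, hvy⟩
  rcases hvy.closeEdge_or_crossing (u := b.1) (w := b.2) with h | ⟨h, -⟩ | ⟨h, -⟩
  · exact hb.2.1 ⟨y, hy, h.mono (closeEdge_mono (restrictConfig_le ω _) _)⟩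
  · exact hvb (h.mono (closeEdge_le _ _))
  · exact hb.not_connected_top (h.mono (closeEdge_mono (restrictConfig_le ω _) _))

theorem CutAt.eq (h : CutAt ω v r A b) (h' : CutAt ω v r A b') : b = b' := by
  by_contra hne
  rcases h.2.2.2.pivotalConn_or_pivotalConn h'.2.2.2 h.armThrough.1 hne with hp | hp
  · exact h'.2.1.2 b.1 b.2 hp h.2.1.1
  · exact h.2.1.2 b'.1 b'.2 hp h'.2.1.1

end CuttingBond

/-- **Lemma 2.3** (Cutting-bond partition). For any vertex `v`, vertex set `A`
and `r ∈ ℕ`, the event `{v ↔ Q_r^c through A}` is the disjoint union of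
`E''(v,r;A)` and, over directed bonds `b = (b̲,b̄)` with `b̲ ∈ Q_r`, of the
events `E'(v,b̲;A) ∩ {b open and pivotal for v ↔ Q_r^c}`. -/
theorem cutting_bond_partition (d : ℕ) (v : Vert d) (A : Set (Vert d)) (r : ℕ)
    (ω : Config d) :
    (ArmThrough ω A v r ↔
        Edprime ω v r A ∨ ∃ b : Vert d × Vert d, CutAt ω v r A b) ∧
      ¬ (Edprime ω v r A ∧ ∃ b : Vert d × Vert d, CutAt ω v r A b) ∧
      ∀ b b' : Vert d × Vert d, CutAt ω v r A b → CutAt ω v r A b' → b = b' := by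
  refine ⟨⟨fun h => or_iff_not_imp_left.2 (exists_cutAt_of_not_edprime h), ?_⟩, ?_,
    fun b b' => CutAt.eq⟩
  · rintro (hE | ⟨b, hb⟩)
    exacts [hE.1, hb.armThrough]
  · rintro ⟨hE, b, hb⟩
    exact hE.2 b.1 b.2 hb.2.2.2 hb.2.1.1

end Percolation
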